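/- arXiv:1205.3669 — 7 statements merged into one kernel-verified Lean document; each statement's English description precedes it below -/
import Mathlib

section
/- Let D be a category and let F, G, H : (ℝ,≤) → D be (ℝ,≤)-indexed diagrams. If F and G are ε-interleaved and G and H are δ-interleaved, then F and H are (ε+δ)-interleaved; more precisely, if (φ', ψ') is an ε-interleaving of F and G and (φ'', ψ'') is a δ-interleaving of G and H, then the horizontal-vertical composites φ = (φ''T_ε)∘φ' : F ⇒ H∘T_{ε+δ} and ψ = (ψ'T_δ)∘ψ'' : H ⇒ F∘T_{ε+δ} form an (ε+δ)-interleaving of F and H. -/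
open CategoryTheory

universe u v

/-- The translation functor `a ↦ a + ε` on the poset category `(ℝ, ≤)`. -/
noncomputable def Tr (ε : ℝ) : ℝ ⥤ ℝ :=
  Monotone.functor (f := fun a => a + ε) (fun _ _ h => by simpa using h)

/-- An `ε`-interleaving of `(ℝ,≤)`-indexed diagrams `F` and `G` in a category `D`:
natural transformations `φ : F ⇒ G ∘ T_ε` and `ψ : G ⇒ F ∘ T_ε` (given componentwise,
together with their naturality squares) such that the two triangle identities
`ψ(a+ε) ∘ φ(a) = F(a ≤ a+2ε)` and `φ(a+ε) ∘ ψ(a) = G(a ≤ a+2ε)` hold. Requires `0 ≤ ε`. -/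
structure Interleaving {D : Type u} [Category.{v} D] (ε : ℝ) (F G : ℝ ⥤ D) where
  hε : 0 ≤ ε
  φ : ∀ a : ℝ, F.obj a ⟶ G.obj (a + ε)
  ψ : ∀ a : ℝ, G.obj a ⟶ F.obj (a + ε)
  natφ : ∀ (a b : ℝ) (h : a ≤ b),
    F.map (homOfLE h) ≫ φ b = φ a ≫ G.map (homOfLE (by linarith : a + ε ≤ b + ε))
  natψ : ∀ (a b : ℝ) (h : a ≤ b),
    G.map (homOfLE h) ≫ ψ b = ψ a ≫ F.map (homOfLE (by linarith : a + ε ≤ b + ε))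
  triφ : ∀ a : ℝ,
    φ a ≫ ψ (a + ε) = F.map (homOfLE (by linarith : a ≤ a + ε + ε))
  triψ : ∀ a : ℝ,
    ψ a ≫ φ (a + ε) = G.map (homOfLE (by linarith : a ≤ a + ε + ε))

/-- `F` and `G` are `ε`-interleaved if an `ε`-interleaving exists. -/
def Interleaved {D : Type u} [Category.{v} D] (ε : ℝ) (F G : ℝ ⥤ D) : Prop :=
  Nonempty (Interleaving ε F G)

/-- The interleaving distance between two `(ℝ,≤)`-indexed diagrams, an extended
nonnegative real number; it is `∞` if `F` and `G` are not `ε`-interleaved for any `ε ≥ 0`. -/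
noncomputable def interleavingDist {D : Type u} [Category.{v} D] (F G : ℝ ⥤ D) : ENNReal :=
  sInf (ENNReal.ofReal '' {ε : ℝ | Interleaved ε F G})

/-- Any `eqToHom` between objects `K.obj b` and `K.obj c` with `b = c` is the image
of the corresponding `homOfLE`. -/
lemma eqToHom_eq_map {D : Type u} [Category.{v} D] (K : ℝ ⥤ D) {b c : ℝ} (e : b = c)
    {pf : K.obj b = K.obj c} :
    (eqToHom pf : K.obj b ⟶ K.obj c) = K.map (homOfLE e.le) := by
  subst e
  rw [Subsingleton.elim pf rfl]
  simp

/-- Composition of interleavings: if `(φ', ψ')` is an `ε`-interleaving of `F` and `G`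
and `(φ'', ψ'')` is a `δ`-interleaving of `G` and `H`, then the composites
`φ = (φ'' T_ε) ∘ φ'` and `ψ = (ψ' T_δ) ∘ ψ''` form an `(ε + δ)`-interleaving of `F` and `H`.
(The `eqToHom`s merely reindex along `a + ε + δ = a + (ε + δ)`.) -/
theorem interleaving_comp {D : Type u} [Category.{v} D] (F G H : ℝ ⥤ D) (ε δ : ℝ)
    (ι₁ : Interleaving ε F G) (ι₂ : Interleaving δ G H) :
    ∃ ι : Interleaving (ε + δ) F H,
      (∀ a : ℝ, ι.φ a = ι₁.φ a ≫ ι₂.φ (a + ε) ≫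
        eqToHom (show H.obj (a + ε + δ) = H.obj (a + (ε + δ)) by rw [add_assoc])) ∧
      (∀ a : ℝ, ι.ψ a = ι₂.ψ a ≫ ι₁.ψ (a + δ) ≫
        eqToHom (show F.obj (a + δ + ε) = F.obj (a + (ε + δ)) by
          rw [show a + δ + ε = a + (ε + δ) by ring])) := by
  have hε := ι₁.hε
  have hδ := ι₂.hε
  refine ⟨⟨add_nonneg hε hδ,
    fun a => ι₁.φ a ≫ ι₂.φ (a + ε) ≫
      eqToHom (show H.obj (a + ε + δ) = H.obj (a + (ε + δ)) by rw [add_assoc]),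
    fun a => ι₂.ψ a ≫ ι₁.ψ (a + δ) ≫
      eqToHom (show F.obj (a + δ + ε) = F.obj (a + (ε + δ)) by
        rw [show a + δ + ε = a + (ε + δ) by ring]),
    ?_, ?_, ?_, ?_⟩, fun a => rfl, fun a => rfl⟩
  · intro a b h
    beta_reduce
    rw [eqToHom_eq_map H (by ring : a + ε + δ = a + (ε + δ)),
      eqToHom_eq_map H (by ring : b + ε + δ = b + (ε + δ)),
      reassoc_of% ι₁.natφ a b h, reassoc_of% ι₂.natφ (a + ε) (b + ε) (by linarith)]
    simp only [Category.assoc, ← Functor.map_comp, homOfLE_comp]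
  · intro a b h
    beta_reduce
    rw [eqToHom_eq_map F (by ring : a + δ + ε = a + (ε + δ)),
      eqToHom_eq_map F (by ring : b + δ + ε = b + (ε + δ)),
      reassoc_of% ι₂.natψ a b h, reassoc_of% ι₁.natψ (a + δ) (b + δ) (by linarith)]
    simp only [Category.assoc, ← Functor.map_comp, homOfLE_comp]
  · intro a
    beta_reduce
    rw [eqToHom_eq_map H (by ring : a + ε + δ = a + (ε + δ)),
      eqToHom_eq_map F (by ring : a + (ε + δ) + δ + ε = a + (ε + δ) + (ε + δ))]
    simp only [Category.assoc]
    rw [reassoc_of% ι₂.natψ (a + ε + δ) (a + (ε + δ)) (by linarith),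
      reassoc_of% ι₂.triφ (a + ε),
      reassoc_of% ι₁.natψ (a + ε + δ + δ) (a + (ε + δ) + δ) (by linarith),
      reassoc_of% ι₁.natψ (a + ε) (a + ε + δ + δ) (by linarith),
      reassoc_of% ι₁.triφ a]
    simp only [Category.assoc, ← Functor.map_comp, homOfLE_comp]
  · intro a
    beta_reduce
    rw [eqToHom_eq_map F (by ring : a + δ + ε = a + (ε + δ)),
      eqToHom_eq_map H (by ring : a + (ε + δ) + ε + δ = a + (ε + δ) + (ε + δ))]
    simp only [Category.assoc]
    rw [reassoc_of% ι₁.natφ (a + δ + ε) (a + (ε + δ)) (by linarith),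
      reassoc_of% ι₁.triψ (a + δ),
      reassoc_of% ι₂.natφ (a + δ + ε + ε) (a + (ε + δ) + ε) (by linarith),
      reassoc_of% ι₂.natφ (a + δ) (a + δ + ε + ε) (by linarith),
      reassoc_of% ι₂.triψ a]
    simp only [Category.assoc, ← Functor.map_comp, homOfLE_comp]
end

section
/- Let D be a category. The interleaving distance d is an extended pseudometric on (ℝ,≤)-indexed diagrams in D: for all diagrams F, G, H one has d(F,F) = 0, d(F,G) = d(G,F), and d(F,H) ≤ d(F,G) + d(G,H). -/
open CategoryTheory

universe u v

section Aux

variable {D : Type u} [Category.{v} D]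

private lemma map_map (F : ℝ ⥤ D) {a b c : ℝ} (h1 : a ≤ b) (h2 : b ≤ c) (h3 : a ≤ c) :
    F.map (homOfLE h1) ≫ F.map (homOfLE h2) = F.map (homOfLE h3) := by
  rw [← F.map_comp]; rfl

/-- The identity `0`-interleaving of `F` with itself. -/
noncomputable def Interleaving.refl (F : ℝ ⥤ D) : Interleaving 0 F F where
  hε := le_refl 0
  φ a := F.map (homOfLE (le_of_eq (add_zero a).symm))
  ψ a := F.map (homOfLE (le_of_eq (add_zero a).symm))
  natφ a b h := by rw [map_map F _ _ (show a ≤ b + 0 by linarith),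
    map_map F _ _ (show a ≤ b + 0 by linarith)]
  natψ a b h := by rw [map_map F _ _ (show a ≤ b + 0 by linarith),
    map_map F _ _ (show a ≤ b + 0 by linarith)]
  triφ a := by rw [map_map F _ _ (show a ≤ a + 0 + 0 by linarith)]
  triψ a := by rw [map_map F _ _ (show a ≤ a + 0 + 0 by linarith)]

/-- Symmetry of interleavings. -/
def Interleaving.symm {ε : ℝ} {F G : ℝ ⥤ D} (I : Interleaving ε F G) :
    Interleaving ε G F where
  hε := I.hε
  φ := I.ψ
  ψ := I.φ
  natφ := I.natψ
  natψ := I.natφ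
  triφ := I.triψ
  triψ := I.triφ

/-- Composition of interleavings. -/
def Interleaving.trans {ε δ : ℝ} {F G H : ℝ ⥤ D}
    (I : Interleaving ε F G) (J : Interleaving δ G H) : Interleaving (ε + δ) F H where
  hε := add_nonneg I.hε J.hε
  φ a := I.φ a ≫ J.φ (a + ε) ≫ H.map (homOfLE (le_of_eq (add_assoc a ε δ)))
  ψ a := J.ψ a ≫ I.ψ (a + δ) ≫ F.map (homOfLE (le_of_eq (by ring : a + δ + ε = a + (ε + δ))))
  natφ a b h := by
    have hδ := J.hε
    simp only [Category.assoc]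
    slice_lhs 1 2 => rw [I.natφ a b h]
    slice_lhs 2 3 => rw [J.natφ (a + ε) (b + ε) (by linarith)]
    simp only [Category.assoc]
    rw [map_map H _ _ (show a + ε + δ ≤ b + (ε + δ) by linarith),
      map_map H _ _ (show a + ε + δ ≤ b + (ε + δ) by linarith)]
  natψ a b h := by
    have hε' := I.hε
    simp only [Category.assoc]
    slice_lhs 1 2 => rw [J.natψ a b h]
    slice_lhs 2 3 => rw [I.natψ (a + δ) (b + δ) (by linarith)]
    simp only [Category.assoc]
    rw [map_map F _ _ (show a + δ + ε ≤ b + (ε + δ) by linarith),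
      map_map F _ _ (show a + δ + ε ≤ b + (ε + δ) by linarith)]
  triφ a := by
    have hε' := I.hε
    have hδ := J.hε
    simp only [Category.assoc]
    slice_lhs 3 4 => rw [J.natψ (a + ε + δ) (a + (ε + δ)) (le_of_eq (add_assoc a ε δ))]
    slice_lhs 2 3 => rw [J.triφ (a + ε)]
    slice_lhs 2 3 => rw [map_map G _ _ (show a + ε ≤ a + (ε + δ) + δ by linarith)]
    slice_lhs 2 3 => rw [I.natψ (a + ε) (a + (ε + δ) + δ) (by linarith)]
    slice_lhs 1 2 => rw [I.triφ a]
    simp only [Category.assoc]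
    rw [map_map F _ _ (show a + ε + ε ≤ a + (ε + δ) + (ε + δ) by linarith),
      map_map F _ _ (show a ≤ a + (ε + δ) + (ε + δ) by linarith)]
  triψ a := by
    have hε' := I.hε
    have hδ := J.hε
    simp only [Category.assoc]
    slice_lhs 3 4 => rw [I.natφ (a + δ + ε) (a + (ε + δ))
      (le_of_eq (by ring : a + δ + ε = a + (ε + δ)))]
    slice_lhs 2 3 => rw [I.triψ (a + δ)]
    slice_lhs 2 3 => rw [map_map G _ _ (show a + δ ≤ a + (ε + δ) + ε by linarith)]
    slice_lhs 2 3 => rw [J.natφ (a + δ) (a + (ε + δ) + ε) (by linarith)]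
    slice_lhs 1 2 => rw [J.triψ a]
    simp only [Category.assoc]
    rw [map_map H _ _ (show a + δ + δ ≤ a + (ε + δ) + (ε + δ) by linarith),
      map_map H _ _ (show a ≤ a + (ε + δ) + (ε + δ) by linarith)]

end Aux

/-- The interleaving distance is an extended pseudometric on `(ℝ,≤)`-indexed diagrams
in a category `D`: it is reflexive, symmetric, and satisfies the triangle inequality. -/
theorem interleavingDist_pseudometric {D : Type u} [Category.{v} D] (F G H : ℝ ⥤ D) :
    interleavingDist F F = 0 ∧
    interleavingDist F G = interleavingDist G F ∧
    interleavingDist F H ≤ interleavingDist F G + interleavingDist G H := by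
  refine ⟨?_, ?_, ?_⟩
  · refine le_antisymm ?_ zero_le
    have h0 : (0 : ℝ) ∈ {ε : ℝ | Interleaved ε F F} := ⟨Interleaving.refl F⟩
    have : (0 : ENNReal) ∈ ENNReal.ofReal '' {ε : ℝ | Interleaved ε F F} :=
      ⟨0, h0, ENNReal.ofReal_zero⟩
    exact sInf_le this
  · have hset : {ε : ℝ | Interleaved ε F G} = {ε : ℝ | Interleaved ε G F} := by
      ext ε
      exact ⟨fun ⟨I⟩ => ⟨I.symm⟩, fun ⟨I⟩ => ⟨I.symm⟩⟩
    unfold interleavingDist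
    rw [hset]
  · have key : ∀ x ∈ ENNReal.ofReal '' {ε : ℝ | Interleaved ε F G},
        ∀ y ∈ ENNReal.ofReal '' {ε : ℝ | Interleaved ε G H},
        interleavingDist F H ≤ x + y := by
      rintro x ⟨ε, ⟨I⟩, rfl⟩ y ⟨δ, ⟨J⟩, rfl⟩
      have hmem : ENNReal.ofReal (ε + δ) ∈
          ENNReal.ofReal '' {ε : ℝ | Interleaved ε F H} :=
        ⟨ε + δ, ⟨I.trans J⟩, rfl⟩
      calc interleavingDist F H ≤ ENNReal.ofReal (ε + δ) := sInf_le hmem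
        _ = ENNReal.ofReal ε + ENNReal.ofReal δ := ENNReal.ofReal_add I.hε J.hε
    show interleavingDist F H ≤
      sInf (ENNReal.ofReal '' {ε : ℝ | Interleaved ε F G}) +
      sInf (ENNReal.ofReal '' {ε : ℝ | Interleaved ε G H})
    rw [ENNReal.sInf_add]
    refine le_iInf₂ fun x hx => ?_
    rw [sInf_eq_iInf', ENNReal.add_iInf]
    exact le_iInf fun ⟨y, hy⟩ => key x hx y hy
end

section
/- Let 𝔽 be a field and let I ⊆ ℝ be an interval. The diagram χ_I in Vec^{(ℝ,≤)} is indecomposable: if χ_I is isomorphic to a direct sum P ⊕ Q of diagrams P, Q : (ℝ,≤) → Vec, then P ≅ 0 or Q ≅ 0. -/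
open CategoryTheory Limits

noncomputable section

variable (𝕜 : Type) [Field 𝕜]

open Classical in
/-- The value of the interval module `χ_I` at `a : ℝ`: the field `𝕜` (as the full submodule
of itself) if `a ∈ I`, and `0` (the trivial submodule) otherwise. -/
def chiObj (I : Set ℝ) (a : ℝ) : Submodule 𝕜 𝕜 :=
  if a ∈ I then ⊤ else ⊥

open Classical in
/-- The structure map of the interval module `χ_I`: the identity of `𝕜` if `a, b ∈ I`,
and `0` otherwise. -/
def chiMap (I : Set ℝ) {a b : ℝ} (_ : a ≤ b) :
    chiObj 𝕜 I a →ₗ[𝕜] chiObj 𝕜 I b :=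
  if h : chiObj 𝕜 I a ≤ chiObj 𝕜 I b then Submodule.inclusion h else 0

open Classical in
lemma chiMap_val (I : Set ℝ) {a b : ℝ} (hab : a ≤ b) (x : chiObj 𝕜 I a) :
    (chiMap 𝕜 I hab x : 𝕜) = if b ∈ I then (x : 𝕜) else 0 := by
  by_cases hb : b ∈ I
  · have h : chiObj 𝕜 I a ≤ chiObj 𝕜 I b := by
      rw [chiObj, chiObj, if_pos hb]
      exact le_top
    rw [chiMap, dif_pos h, if_pos hb]
    rfl
  · rw [if_neg hb]
    by_cases ha : a ∈ I
    · have h : ¬ chiObj 𝕜 I a ≤ chiObj 𝕜 I b := by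
        simp only [chiObj, if_pos ha, if_neg hb]
        intro h
        have := h (Submodule.mem_top (x := (1 : 𝕜)))
        exact one_ne_zero ((Submodule.mem_bot 𝕜).mp this)
      rw [chiMap, dif_neg h]
      rfl
    · have hx : (x : 𝕜) = 0 := by
        have := x.2
        simp only [chiObj, if_neg ha] at this
        exact (Submodule.mem_bot 𝕜).mp this
      by_cases h : chiObj 𝕜 I a ≤ chiObj 𝕜 I b
      · rw [chiMap, dif_pos h]
        simpa [Submodule.inclusion] using hx
      · rw [chiMap, dif_neg h]
        rfl

lemma chiMap_id (I : Set ℝ) (a : ℝ) :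
    chiMap 𝕜 I (le_refl a) = LinearMap.id := by
  apply LinearMap.ext
  intro x
  apply Subtype.ext
  rw [chiMap_val]
  classical
  by_cases ha : a ∈ I
  · rw [if_pos ha]
    rfl
  · rw [if_neg ha]
    have := x.2
    simp only [chiObj, if_neg ha] at this
    have hx := (Submodule.mem_bot 𝕜).mp this
    simp [hx]

lemma chiMap_comp (I : Set ℝ) (hI : I.OrdConnected) {a b c : ℝ} (hab : a ≤ b) (hbc : b ≤ c) :
    chiMap 𝕜 I hbc ∘ₗ chiMap 𝕜 I hab = chiMap 𝕜 I (hab.trans hbc) := by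
  apply LinearMap.ext
  intro x
  apply Subtype.ext
  show (chiMap 𝕜 I hbc (chiMap 𝕜 I hab x) : 𝕜) = (chiMap 𝕜 I (hab.trans hbc) x : 𝕜)
  rw [chiMap_val, chiMap_val, chiMap_val]
  classical
  by_cases hc : c ∈ I
  · rw [if_pos hc, if_pos hc]
    by_cases hb : b ∈ I
    · rw [if_pos hb]
    · rw [if_neg hb]
      by_cases ha : a ∈ I
      · exact absurd (hI.out ha hc ⟨hab, hbc⟩) hb
      · have := x.2
        simp only [chiObj, if_neg ha, Submodule.mem_bot] at this
        simp [this]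
  · rw [if_neg hc, if_neg hc]

/-- The interval module (diagram) `χ_I : (ℝ,≤) ⥤ Vec` associated to an interval `I ⊆ ℝ`
(`Vec` is the category of finite-dimensional `𝕜`-vector spaces): it is `𝕜` on `I` with
identity structure maps, and `0` elsewhere. -/
def chi (I : Set ℝ) (hI : I.OrdConnected) : ℝ ⥤ FGModuleCat 𝕜 where
  obj a := FGModuleCat.of 𝕜 (chiObj 𝕜 I a)
  map {a b} h := FGModuleCat.ofHom (chiMap 𝕜 I (leOfHom h))
  map_id a := by rw [chiMap_id]; rfl
  map_comp {a b c} h h' := by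
    rw [← chiMap_comp 𝕜 I hI (leOfHom h) (leOfHom h')]; rfl

end

noncomputable instance (𝕜 : Type) [Field 𝕜] :
    CategoryTheory.Limits.HasFiniteBiproducts (FGModuleCat 𝕜) :=
  CategoryTheory.Limits.HasFiniteBiproducts.of_hasFiniteProducts

noncomputable instance (𝕜 : Type) [Field 𝕜] :
    CategoryTheory.Limits.HasFiniteBiproducts (ℝ ⥤ FGModuleCat 𝕜) :=
  CategoryTheory.Limits.HasFiniteBiproducts.of_hasFiniteProducts

open CategoryTheory Limits

noncomputable instance (𝕜 : Type) [Field 𝕜] :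
    HasBinaryBiproducts (ℝ ⥤ FGModuleCat 𝕜) :=
  HasBinaryBiproducts.of_hasBinaryProducts

section Aux

open Classical

variable {𝕜 : Type} [Field 𝕜] {I : Set ℝ}

noncomputable def oneI (𝕜 : Type) [Field 𝕜] {I : Set ℝ} {a : ℝ} (ha : a ∈ I) : chiObj 𝕜 I a :=
  ⟨1, by rw [chiObj, if_pos ha]; exact Submodule.mem_top⟩

lemma endo_apply {a : ℝ} (ha : a ∈ I) (L : chiObj 𝕜 I a →ₗ[𝕜] chiObj 𝕜 I a)
    (x : chiObj 𝕜 I a) : (L x : 𝕜) = (x : 𝕜) * (L (oneI 𝕜 ha) : 𝕜) := by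
  have hx : x = (x : 𝕜) • oneI 𝕜 ha := by
    apply Subtype.ext
    simp [oneI]
  calc (L x : 𝕜) = (L ((x : 𝕜) • oneI 𝕜 ha) : 𝕜) := by rw [← hx]
    _ = (x : 𝕜) * (L (oneI 𝕜 ha) : 𝕜) := by rw [L.map_smul]; rfl

lemma mem_bot_of_not_mem {a : ℝ} (ha : a ∉ I) (x : chiObj 𝕜 I a) : (x : 𝕜) = 0 := by
  have := x.2
  simp only [chiObj, if_neg ha] at this
  exact (Submodule.mem_bot 𝕜).mp this

lemma idem_endo (𝕜 : Type) [Field 𝕜] (I : Set ℝ) (hI : I.OrdConnected)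
    (φ : chi 𝕜 I hI ⟶ chi 𝕜 I hI) (hφ : φ ≫ φ = φ) :
    φ = 0 ∨ φ = 𝟙 _ := by
  let L : ∀ a : ℝ, chiObj 𝕜 I a →ₗ[𝕜] chiObj 𝕜 I a := fun a => (φ.app a).hom.hom
  let c : ∀ {a : ℝ}, a ∈ I → 𝕜 := fun {a} ha => ((L a) (oneI 𝕜 ha) : 𝕜)
  have hidem : ∀ {a : ℝ} (ha : a ∈ I), c ha * c ha = c ha := by
    intro a ha
    have h1 : φ.app a ≫ φ.app a = φ.app a := by
      rw [← NatTrans.comp_app, hφ]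
    have h2 : (L a).comp (L a) = L a := congrArg (fun f => f.hom.hom) h1
    have h3 := congrArg (fun f => ((f (oneI 𝕜 ha) : chiObj 𝕜 I a) : 𝕜)) h2
    simp only [LinearMap.comp_apply] at h3
    rw [endo_apply ha] at h3
    exact h3
  have hconst : ∀ {a b : ℝ} (ha : a ∈ I) (hb : b ∈ I), a ≤ b → c ha = c hb := by
    intro a b ha hb hab
    have h1 := φ.naturality (homOfLE hab)
    have h2 : (L b).comp (chiMap 𝕜 I hab) = (chiMap 𝕜 I hab).comp (L a) := congrArg (fun f => f.hom.hom) h1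
    have h3 := congrArg (fun f => ((f (oneI 𝕜 ha) : chiObj 𝕜 I b) : 𝕜)) h2
    simp only [LinearMap.comp_apply] at h3
    have hl : (chiMap 𝕜 I hab (oneI 𝕜 ha) : 𝕜) = 1 := by
      rw [chiMap_val, if_pos hb]; rfl
    have hone : chiMap 𝕜 I hab (oneI 𝕜 ha) = oneI 𝕜 hb := Subtype.ext hl
    rw [hone, chiMap_val, if_pos hb] at h3
    exact h3.symm
  by_cases hex : ∃ a, ∃ ha : a ∈ I, c ha ≠ 0
  · right
    obtain ⟨a₀, ha₀, hc₀⟩ := hex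
    have hc₀1 : c ha₀ = 1 := by
      have h := hidem ha₀
      have : c ha₀ * c ha₀ = c ha₀ * 1 := by rw [h, mul_one]
      exact mul_left_cancel₀ hc₀ this
    have hall : ∀ {a : ℝ} (ha : a ∈ I), c ha = 1 := by
      intro a ha
      rcases le_total a a₀ with h | h
      · rw [hconst ha ha₀ h, hc₀1]
      · rw [← hconst ha₀ ha h, hc₀1]
    apply NatTrans.ext
    funext a
    have : L a = LinearMap.id := by
      apply LinearMap.ext
      intro x
      apply Subtype.ext
      show ((L a) x : 𝕜) = (x : 𝕜)
      by_cases ha : a ∈ I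
      · rw [endo_apply ha]
        have : ((L a) (oneI 𝕜 ha) : 𝕜) = 1 := hall ha
        rw [this, mul_one]
      · have hx := mem_bot_of_not_mem ha x
        have hx0 : x = 0 := Subtype.ext hx
        rw [hx0, map_zero]
    exact FGModuleCat.hom_ext this
  · left
    push_neg at hex
    apply NatTrans.ext
    funext a
    have : L a = 0 := by
      apply LinearMap.ext
      intro x
      apply Subtype.ext
      show ((L a) x : 𝕜) = ((0 : chiObj 𝕜 I a) : 𝕜)
      by_cases ha : a ∈ I
      · rw [endo_apply ha]
        have : ((L a) (oneI 𝕜 ha) : 𝕜) = 0 := hex a ha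
        rw [this, mul_zero]
        rfl
      · have hx := mem_bot_of_not_mem ha x
        have hx0 : x = 0 := Subtype.ext hx
        rw [hx0, map_zero]
    exact FGModuleCat.hom_ext this

end Aux

/-- The interval module `χ_I` is indecomposable: if `χ_I ≅ P ⊞ Q` then `P ≅ 0` or `Q ≅ 0`. -/
theorem chi_indecomposable (𝕜 : Type) [Field 𝕜] (I : Set ℝ) (hI : I.OrdConnected)
    (P Q : ℝ ⥤ FGModuleCat 𝕜) (e : chi 𝕜 I hI ≅ P ⊞ Q) :
    IsZero P ∨ IsZero Q := by
  set p : chi 𝕜 I hI ⟶ chi 𝕜 I hI := e.hom ≫ biprod.fst ≫ biprod.inl ≫ e.inv with hp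
  have hpi : p ≫ p = p := by
    simp only [hp, Category.assoc, Iso.inv_hom_id_assoc]
    rw [biprod.inl_fst_assoc]
  rcases idem_endo 𝕜 I hI p hpi with h0 | h1
  · left
    rw [IsZero.iff_id_eq_zero]
    have : 𝟙 P = biprod.inl ≫ e.inv ≫ p ≫ e.hom ≫ biprod.fst := by
      simp only [hp, Category.assoc, Iso.inv_hom_id_assoc, Iso.inv_hom_id]
      simp
    rw [this, h0]
    simp
  · right
    rw [IsZero.iff_id_eq_zero]
    have hq : e.hom ≫ biprod.snd ≫ biprod.inr ≫ e.inv = 𝟙 _ - p := by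
      rw [hp]
      have := biprod.total (X := P) (Y := Q)
      rw [eq_sub_iff_add_eq]
      calc e.hom ≫ biprod.snd ≫ biprod.inr ≫ e.inv + e.hom ≫ biprod.fst ≫ biprod.inl ≫ e.inv
          = e.hom ≫ (biprod.fst ≫ biprod.inl + biprod.snd ≫ biprod.inr) ≫ e.inv := by
            simp only [Preadditive.comp_add, Preadditive.add_comp, Category.assoc]
            rw [add_comm]
        _ = 𝟙 _ := by rw [this]; simp
    have hq0 : e.hom ≫ biprod.snd ≫ biprod.inr ≫ e.inv = 0 := by
      rw [hq, h1, sub_self]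
    have : 𝟙 Q = biprod.inr ≫ e.inv ≫ (e.hom ≫ biprod.snd ≫ biprod.inr ≫ e.inv) ≫ e.hom ≫ biprod.snd := by
      simp only [Category.assoc, Iso.inv_hom_id_assoc, Iso.inv_hom_id]
      simp
    rw [this, hq0]
    simp
end

section
/- (Stability Theorem) Let X be a topological space and f, g : X → ℝ arbitrary (not necessarily continuous) functions. Let F, G : (ℝ,≤) → Top be the sublevel-set diagrams F(a) = f^{-1}((−∞,a]), G(a) = g^{-1}((−∞,a]) (with the subspace topology), with morphisms given by inclusion. Then for any category D and any functor H : Top → D, the interleaving distance satisfies d(H∘F, H∘G) ≤ ‖f−g‖_∞, where ‖f−g‖_∞ = sup_{x∈X} |f(x)−g(x)|. -/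
open CategoryTheory

universe u v

/-- The sublevel-set diagram of a (not necessarily continuous) function `f : X → ℝ`:
`F(a) = f⁻¹((-∞, a])` with the subspace topology, and inclusions as structure maps. -/
noncomputable def sublevel {X : Type} [TopologicalSpace X] (f : X → ℝ) : ℝ ⥤ TopCat where
  obj a := TopCat.of {x : X // f x ≤ a}
  map {a b} h := TopCat.ofHom ⟨fun x => ⟨x.1, x.2.trans (leOfHom h)⟩, by continuity⟩


/-- Push an interleaving forward along a functor. -/
def Interleaving.map {D : Type u} [Category.{v} D] {D' : Type*} [Category D']
    {ε : ℝ} {F G : ℝ ⥤ D} (I : Interleaving ε F G) (H : D ⥤ D') :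
    Interleaving ε (F ⋙ H) (G ⋙ H) where
  hε := I.hε
  φ a := H.map (I.φ a)
  ψ a := H.map (I.ψ a)
  natφ a b h := by
    simp only [Functor.comp_map, ← H.map_comp, I.natφ a b h]
  natψ a b h := by
    simp only [Functor.comp_map, ← H.map_comp, I.natψ a b h]
  triφ a := by
    simp only [Functor.comp_map, ← H.map_comp, I.triφ a]
  triψ a := by
    simp only [Functor.comp_map, ← H.map_comp, I.triψ a]

/-- The basic interleaving between sublevel diagrams of `ε`-close functions. -/
noncomputable def sublevelInterleaving {X : Type} [TopologicalSpace X] (f g : X → ℝ) (ε : ℝ)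
    (hε : 0 ≤ ε) (h : ∀ x, |f x - g x| ≤ ε) :
    Interleaving ε (sublevel f) (sublevel g) where
  hε := hε
  φ a := TopCat.ofHom ⟨fun x => ⟨x.1, by have := abs_le.mp (h x.1); have := x.2; linarith⟩, by exact Continuous.subtype_mk continuous_subtype_val _⟩
  ψ a := TopCat.ofHom ⟨fun x => ⟨x.1, by have := abs_le.mp (h x.1); have := x.2; linarith⟩, by exact Continuous.subtype_mk continuous_subtype_val _⟩
  natφ a b hab := by ext x; rfl
  natψ a b hab := by ext x; rfl
  triφ a := by ext x; rfl
  triψ a := by ext x; rfl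

theorem interleavingDist_le {D : Type u} [Category.{v} D] {F G : ℝ ⥤ D} {ε : ℝ}
    (h : Interleaved ε F G) : interleavingDist F G ≤ ENNReal.ofReal ε :=
  sInf_le ⟨ε, h, rfl⟩

/-- Stability Theorem: for any functions `f, g : X → ℝ` on a topological space and any
functor `H : Top ⥤ D`, the interleaving distance between `H ∘ F` and `H ∘ G` is at most
the sup norm `‖f - g‖_∞ = ⨆ x, |f x - g x|`. -/
theorem stability {X : Type} [TopologicalSpace X] (f g : X → ℝ)
    {D : Type u} [Category.{v} D] (H : TopCat ⥤ D) :
    interleavingDist (sublevel f ⋙ H) (sublevel g ⋙ H) ≤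
      ⨆ x : X, ENNReal.ofReal |f x - g x| := by
  set S := ⨆ x : X, ENNReal.ofReal |f x - g x| with hS
  rcases eq_or_ne S ⊤ with hT | hT
  · simp [hT]
  · have hxle : ∀ x : X, |f x - g x| ≤ S.toReal := by
      intro x
      have h1 : ENNReal.ofReal |f x - g x| ≤ S := le_iSup (fun x => ENNReal.ofReal |f x - g x|) x
      have := ENNReal.toReal_mono hT h1
      rwa [ENNReal.toReal_ofReal (abs_nonneg _)] at this
    have hI : Interleaved S.toReal (sublevel f ⋙ H) (sublevel g ⋙ H) :=
      ⟨(sublevelInterleaving f g S.toReal ENNReal.toReal_nonneg hxle).map H⟩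
    calc interleavingDist (sublevel f ⋙ H) (sublevel g ⋙ H)
        ≤ ENNReal.ofReal S.toReal := interleavingDist_le hI
      _ = S := ENNReal.ofReal_toReal hT
end

section
/- (Stability for extended persistence, interleaving at the level of spaces) Let X be a topological space, M ∈ ℝ, s > 0, and let f, g : X → ℝ be (not necessarily continuous) functions bounded above by M. Define F : (ℝ,≤) → Pair by F(c) = (f^{-1}((−∞,c]), ∅) for c < M+s and F(c) = (X, f^{-1}([2M+s−c,∞))) for c ≥ M+s, with morphisms given by inclusions of pairs, and define G similarly from g. Then F and G are ε-interleaved (via the inclusion natural transformations) for ε = ‖f−g‖_∞; consequently, for any category D and any functor H : Pair → D, d(H∘F, H∘G) ≤ ‖f−g‖_∞. -/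
open CategoryTheory

universe u v

/-- The category of pairs of topological spaces: objects are pairs `(X, A)` of a space
and a subset, morphisms `(X, A) ⟶ (Y, B)` are continuous maps `X → Y` carrying `A`
into `B`. -/
structure TopSpacePair : Type 1 where
  carrier : Type
  [topology : TopologicalSpace carrier]
  sub : Set carrier

attribute [instance] TopSpacePair.topology

instance : Category TopSpacePair where
  Hom P Q := {f : C(P.carrier, Q.carrier) // Set.MapsTo f P.sub Q.sub}
  id P := ⟨ContinuousMap.id _, fun _ hx => hx⟩
  comp f g := ⟨g.1.comp f.1, fun _ hx => g.2 (f.2 hx)⟩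
  id_comp f := Subtype.ext (ContinuousMap.comp_id f.1)
  comp_id f := Subtype.ext (ContinuousMap.id_comp f.1)
  assoc f g h := Subtype.ext (ContinuousMap.comp_assoc h.1 g.1 f.1).symm

/-- The extended-persistence diagram of pairs associated to `f : X → ℝ` bounded above
by `M`, with spacing `s > 0`: for `c < M + s` it is `(f⁻¹(-∞, c], ∅)` and for
`c ≥ M + s` it is `(X, f⁻¹[2M + s - c, ∞))`, with inclusions as structure maps.
(The total space is realized as the subtype on the predicate `f x ≤ c ∨ M + s ≤ c`,
which is the sublevel set for `c < M + s` and all of `X` for `c ≥ M + s`.) -/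
noncomputable def extendedPair {X : Type} [TopologicalSpace X] (f : X → ℝ) (M s : ℝ) :
    ℝ ⥤ TopSpacePair where
  obj c :=
    { carrier := {x : X // f x ≤ c ∨ M + s ≤ c}
      sub := {x | M + s ≤ c ∧ 2 * M + s - c ≤ f x.1} }
  map {c d} h :=
    ⟨⟨fun x => ⟨x.1, x.2.imp (fun h1 => h1.trans (leOfHom h)) (fun h1 => h1.trans (leOfHom h))⟩,
      by continuity⟩,
      fun x hx => ⟨hx.1.trans (leOfHom h), le_trans (by have := leOfHom h; linarith) hx.2⟩⟩

/-- The inclusion morphism used in the interleaving. -/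
def interHom {X : Type} [TopologicalSpace X] (f g : X → ℝ) (M s ε : ℝ)
    (hε : 0 ≤ ε) (hfg : ∀ x, |f x - g x| ≤ ε) (a : ℝ) :
    (extendedPair f M s).obj a ⟶ (extendedPair g M s).obj (a + ε) :=
  ⟨⟨fun x => ⟨x.1, x.2.imp
      (fun h1 => by have := (abs_le.mp (hfg x.1)).1; linarith)
      (fun h1 => by linarith)⟩,
    Continuous.subtype_mk continuous_subtype_val _⟩,
   fun x hx => ⟨by have := hx.1; linarith,
     by have h2 := hx.2; have := (abs_le.mp (hfg x.1)).2; show 2 * M + s - (a + ε) ≤ g x.1; linarith⟩⟩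

/-- Stability for extended persistence: if `f, g : X → ℝ` are bounded above by `M` and
`|f - g| ≤ ε` pointwise (in particular for `ε = ‖f - g‖_∞`), then the extended
persistence diagrams `F` and `G` are `ε`-interleaved via inclusions; consequently, for
any functor `H : Pair ⥤ D`, `d(H ∘ F, H ∘ G) ≤ ε`. -/
theorem stability_extended {X : Type} [TopologicalSpace X] (M s : ℝ) (hs : 0 < s)
    (f g : X → ℝ) (hfM : ∀ x, f x ≤ M) (hgM : ∀ x, g x ≤ M)
    (ε : ℝ) (hε : 0 ≤ ε) (hfg : ∀ x, |f x - g x| ≤ ε)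
    {D : Type u} [Category.{v} D] (H : TopSpacePair ⥤ D) :
    Interleaved ε (extendedPair f M s) (extendedPair g M s) ∧
    interleavingDist (extendedPair f M s ⋙ H) (extendedPair g M s ⋙ H) ≤
      ENNReal.ofReal ε := by
  have hfg' : ∀ x, |g x - f x| ≤ ε := fun x => by rw [abs_sub_comm]; exact hfg x
  have hI : Interleaving ε (extendedPair f M s) (extendedPair g M s) :=
    { hε := hε
      φ := interHom f g M s ε hε hfg
      ψ := interHom g f M s ε hε hfg'
      natφ := fun a b h => by apply Subtype.ext; ext x; rfl
      natψ := fun a b h => by apply Subtype.ext; ext x; rfl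
      triφ := fun a => by apply Subtype.ext; ext x; rfl
      triψ := fun a => by apply Subtype.ext; ext x; rfl }
  refine ⟨⟨hI⟩, ?_⟩
  exact sInf_le ⟨ε, ⟨hI.map H⟩, rfl⟩
end

section
/- (Pullbacks of interleavings) Let A be an abelian category. Let (F, G, φ, ψ), (F', G', φ', ψ'), (F'', G'', φ'', ψ'') be ε-interleavings of diagrams (ℝ,≤) → A, and let (α', β') and (α'', β''), with α' : F' ⇒ F, β' : G' ⇒ G, α'' : F'' ⇒ F, β'' : G'' ⇒ G, be morphisms of interleavings (i.e., φ∘α' = (β'T_ε)∘φ', ψ∘β' = (α'T_ε)∘ψ', and similarly for (α'',β'')). Form the pullbacks F'×_F F'' and G'×_G G'' in the abelian functor category A^{(ℝ,≤)}. Then the natural transformations Φ = φ'×_φ φ'' : F'×_F F'' ⇒ (G'×_G G'')∘T_ε and Ψ = ψ'×_ψ ψ'' : G'×_G G'' ⇒ (F'×_F F'')∘T_ε induced by the universal property of pullbacks form an ε-interleaving of F'×_F F'' and G'×_G G''. -/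
open CategoryTheory

universe u v

open CategoryTheory.Limits

/-- Pullbacks of interleavings: given morphisms of `ε`-interleavings
`(α', β') : (F', G', φ', ψ') → (F, G, φ, ψ)` and `(α'', β'') : (F'', G'', φ'', ψ'') → (F, G, φ, ψ)`,
the natural transformations `Φ = φ' ×_φ φ''` and `Ψ = ψ' ×_ψ ψ''` induced on the
pullbacks `F' ×_F F''` and `G' ×_G G''` (taken in the abelian functor category
`A^(ℝ,≤)`) by the universal property — i.e. the unique ones compatible with the
pullback projections — form an `ε`-interleaving of `F' ×_F F''` and `G' ×_G G''`. -/
theorem pullback_interleaving {A : Type u} [Category.{v} A] [Abelian A] (ε : ℝ)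
    {F G F' G' F'' G'' : ℝ ⥤ A}
    (ι : Interleaving ε F G) (ι' : Interleaving ε F' G') (ι'' : Interleaving ε F'' G'')
    (α' : F' ⟶ F) (β' : G' ⟶ G) (α'' : F'' ⟶ F) (β'' : G'' ⟶ G)
    (hφ' : ∀ a : ℝ, α'.app a ≫ ι.φ a = ι'.φ a ≫ β'.app (a + ε))
    (hψ' : ∀ a : ℝ, β'.app a ≫ ι.ψ a = ι'.ψ a ≫ α'.app (a + ε))
    (hφ'' : ∀ a : ℝ, α''.app a ≫ ι.φ a = ι''.φ a ≫ β''.app (a + ε))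
    (hψ'' : ∀ a : ℝ, β''.app a ≫ ι.ψ a = ι''.ψ a ≫ α''.app (a + ε)) :
    ∃ P : Interleaving ε (pullback α' α'') (pullback β' β''),
      (∀ a : ℝ, P.φ a ≫ (pullback.fst β' β'').app (a + ε) =
        (pullback.fst α' α'').app a ≫ ι'.φ a) ∧
      (∀ a : ℝ, P.φ a ≫ (pullback.snd β' β'').app (a + ε) =
        (pullback.snd α' α'').app a ≫ ι''.φ a) ∧
      (∀ a : ℝ, P.ψ a ≫ (pullback.fst α' α'').app (a + ε) =
        (pullback.fst β' β'').app a ≫ ι'.ψ a) ∧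
      (∀ a : ℝ, P.ψ a ≫ (pullback.snd α' α'').app (a + ε) =
        (pullback.snd β' β'').app a ≫ ι''.ψ a) := by
  have condα : ∀ a : ℝ,
      (pullback.fst α' α'').app a ≫ α'.app a = (pullback.snd α' α'').app a ≫ α''.app a :=
    fun a => congrArg (fun η : pullback α' α'' ⟶ F => η.app a) pullback.condition
  have condβ : ∀ a : ℝ,
      (pullback.fst β' β'').app a ≫ β'.app a = (pullback.snd β' β'').app a ≫ β''.app a :=
    fun a => congrArg (fun η : pullback β' β'' ⟶ G => η.app a) pullback.condition
  have Lα : ∀ a : ℝ, IsLimit (PullbackCone.mk ((pullback.fst α' α'').app a)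
      ((pullback.snd α' α'').app a) (condα a)) :=
    fun a => isLimitOfHasPullbackOfPreservesLimit ((evaluation ℝ A).obj a) α' α''
  have Lβ : ∀ a : ℝ, IsLimit (PullbackCone.mk ((pullback.fst β' β'').app a)
      ((pullback.snd β' β'').app a) (condβ a)) :=
    fun a => isLimitOfHasPullbackOfPreservesLimit ((evaluation ℝ A).obj a) β' β''
  have wφ : ∀ a : ℝ,
      ((pullback.fst α' α'').app a ≫ ι'.φ a) ≫ β'.app (a + ε) =
      ((pullback.snd α' α'').app a ≫ ι''.φ a) ≫ β''.app (a + ε) := by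
    intro a
    rw [Category.assoc, ← hφ', Category.assoc, ← hφ'', ← Category.assoc, condα a,
      Category.assoc]
  have wψ : ∀ a : ℝ,
      ((pullback.fst β' β'').app a ≫ ι'.ψ a) ≫ α'.app (a + ε) =
      ((pullback.snd β' β'').app a ≫ ι''.ψ a) ≫ α''.app (a + ε) := by
    intro a
    rw [Category.assoc, ← hψ', Category.assoc, ← hψ'', ← Category.assoc, condβ a,
      Category.assoc]
  set Φ : ∀ a : ℝ, (pullback α' α'').obj a ⟶ (pullback β' β'').obj (a + ε) :=
    fun a => PullbackCone.IsLimit.lift (Lβ (a + ε)) _ _ (wφ a) with hΦ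
  set Ψ : ∀ a : ℝ, (pullback β' β'').obj a ⟶ (pullback α' α'').obj (a + ε) :=
    fun a => PullbackCone.IsLimit.lift (Lα (a + ε)) _ _ (wψ a) with hΨ
  have Φfst : ∀ a : ℝ, Φ a ≫ (pullback.fst β' β'').app (a + ε) =
      (pullback.fst α' α'').app a ≫ ι'.φ a :=
    fun a => PullbackCone.IsLimit.lift_fst (Lβ (a + ε)) _ _ (wφ a)
  have Φsnd : ∀ a : ℝ, Φ a ≫ (pullback.snd β' β'').app (a + ε) =
      (pullback.snd α' α'').app a ≫ ι''.φ a :=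
    fun a => PullbackCone.IsLimit.lift_snd (Lβ (a + ε)) _ _ (wφ a)
  have Ψfst : ∀ a : ℝ, Ψ a ≫ (pullback.fst α' α'').app (a + ε) =
      (pullback.fst β' β'').app a ≫ ι'.ψ a :=
    fun a => PullbackCone.IsLimit.lift_fst (Lα (a + ε)) _ _ (wψ a)
  have Ψsnd : ∀ a : ℝ, Ψ a ≫ (pullback.snd α' α'').app (a + ε) =
      (pullback.snd β' β'').app a ≫ ι''.ψ a :=
    fun a => PullbackCone.IsLimit.lift_snd (Lα (a + ε)) _ _ (wψ a)
  have extα : ∀ (c : ℝ) {W : A} (k l : W ⟶ (pullback α' α'').obj c),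
      k ≫ (pullback.fst α' α'').app c = l ≫ (pullback.fst α' α'').app c →
      k ≫ (pullback.snd α' α'').app c = l ≫ (pullback.snd α' α'').app c → k = l :=
    fun c _ _ _ h0 h1 => PullbackCone.IsLimit.hom_ext (Lα c) h0 h1
  have extβ : ∀ (c : ℝ) {W : A} (k l : W ⟶ (pullback β' β'').obj c),
      k ≫ (pullback.fst β' β'').app c = l ≫ (pullback.fst β' β'').app c →
      k ≫ (pullback.snd β' β'').app c = l ≫ (pullback.snd β' β'').app c → k = l :=
    fun c _ _ _ h0 h1 => PullbackCone.IsLimit.hom_ext (Lβ c) h0 h1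
  refine ⟨{ hε := ι.hε, φ := Φ, ψ := Ψ, natφ := ?_, natψ := ?_, triφ := ?_, triψ := ?_ },
    Φfst, Φsnd, Ψfst, Ψsnd⟩
  · intro a b h
    apply extβ (b + ε) <;>
      simp only [PullbackCone.mk_fst, PullbackCone.mk_snd, Category.assoc, Φfst, Φsnd,
        (pullback.fst β' β'').naturality, (pullback.snd β' β'').naturality]
    · rw [reassoc_of% Φfst a, ← ι'.natφ a b h, ← Category.assoc,
        (pullback.fst α' α'').naturality, Category.assoc]
    · rw [reassoc_of% Φsnd a, ← ι''.natφ a b h, ← Category.assoc,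
        (pullback.snd α' α'').naturality, Category.assoc]
  · intro a b h
    apply extα (b + ε) <;>
      simp only [PullbackCone.mk_fst, PullbackCone.mk_snd, Category.assoc, Ψfst, Ψsnd,
        (pullback.fst α' α'').naturality, (pullback.snd α' α'').naturality]
    · rw [reassoc_of% Ψfst a, ← ι'.natψ a b h, ← Category.assoc,
        (pullback.fst β' β'').naturality, Category.assoc]
    · rw [reassoc_of% Ψsnd a, ← ι''.natψ a b h, ← Category.assoc,
        (pullback.snd β' β'').naturality, Category.assoc]
  · intro a
    apply extα (a + ε + ε) <;>
      simp only [PullbackCone.mk_fst, PullbackCone.mk_snd, Category.assoc]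
    · rw [Ψfst (a + ε), reassoc_of% Φfst a, ι'.triφ a,
        (pullback.fst α' α'').naturality]
    · rw [Ψsnd (a + ε), reassoc_of% Φsnd a, ι''.triφ a,
        (pullback.snd α' α'').naturality]
  · intro a
    apply extβ (a + ε + ε) <;>
      simp only [PullbackCone.mk_fst, PullbackCone.mk_snd, Category.assoc]
    · rw [Φfst (a + ε), reassoc_of% Ψfst a, ι'.triψ a,
        (pullback.fst β' β'').naturality]
    · rw [Φsnd (a + ε), reassoc_of% Ψsnd a, ι''.triψ a,
        (pullback.snd β' β'').naturality]
end

section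
/- (Stability for kernels, images and cokernels) Let h : Y → X be a continuous map of topological spaces, and let f, f' : X → ℝ and g, g' : Y → ℝ be (not necessarily continuous) maps such that f(h(y)) ≤ g(y) and f'(h(y)) ≤ g'(y) for all y ∈ Y. Let F, F' : (ℝ,≤) → Top be the sublevel-set diagrams of f, f' on X, and G, G' those of g, g' on Y, with morphisms given by inclusion; h induces natural transformations α : G ⇒ F and β : G' ⇒ F' (by restriction of h). Let A be an abelian category, H : Top → A any functor, and ε = max(‖f−f'‖_∞, ‖g−g'‖_∞). Then in the abelian functor category A^{(ℝ,≤)}, each of the interleaving distances d(ker Hα, ker Hβ), d(im Hα, im Hβ), and d(coker Hα, coker Hβ) is at most ε. -/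
open CategoryTheory

universe u v

open CategoryTheory.Limits

/-- The natural transformation of sublevel-set diagrams induced by a continuous map
`h : Y → X` with `f ∘ h ≤ g` pointwise. -/
noncomputable def sublevelMap {X Y : Type} [TopologicalSpace X] [TopologicalSpace Y]
    (h : C(Y, X)) (f : X → ℝ) (g : Y → ℝ) (hfg : ∀ y, f (h y) ≤ g y) :
    sublevel g ⟶ sublevel f where
  app a := TopCat.ofHom ⟨fun y => ⟨h y.1, (hfg y.1).trans y.2⟩,
    (h.continuous.comp continuous_subtype_val).subtype_mk _⟩
  naturality a b hab := rfl



open CategoryTheory.Limits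

section General

variable {D : Type*} [Category D] {E : Type*} [Category E]

lemma interleavingDist_le_ofReal {F G : ℝ ⥤ D} {ε : ℝ} (h : Interleaved ε F G) :
    interleavingDist F G ≤ ENNReal.ofReal ε :=
  sInf_le ⟨ε, h, rfl⟩

/-- Push an interleaving forward along a functor. -/
def Interleaving.comp {ε : ℝ} {F G : ℝ ⥤ D} (I : Interleaving ε F G) (Φ : D ⥤ E) :
    Interleaving ε (F ⋙ Φ) (G ⋙ Φ) where
  hε := I.hε
  φ a := Φ.map (I.φ a)
  ψ a := Φ.map (I.ψ a)
  natφ a b h := by dsimp; rw [← Φ.map_comp, ← Φ.map_comp, I.natφ a b h]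
  natψ a b h := by dsimp; rw [← Φ.map_comp, ← Φ.map_comp, I.natψ a b h]
  triφ a := by dsimp; rw [← Φ.map_comp, I.triφ a]
  triψ a := by dsimp; rw [← Φ.map_comp, I.triψ a]

/-- Transport an interleaving across isomorphisms of diagrams. -/
def Interleaving.congr {ε : ℝ} {F G F' G' : ℝ ⥤ D} (I : Interleaving ε F G)
    (e : F ≅ F') (e' : G ≅ G') : Interleaving ε F' G' where
  hε := I.hε
  φ a := e.inv.app a ≫ I.φ a ≫ e'.hom.app (a + ε)
  ψ a := e'.inv.app a ≫ I.ψ a ≫ e.hom.app (a + ε)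
  natφ a b h := by
    rw [NatTrans.naturality_assoc, reassoc_of% (I.natφ a b h)]
    simp [NatTrans.naturality]
  natψ a b h := by
    rw [NatTrans.naturality_assoc, reassoc_of% (I.natψ a b h)]
    simp [NatTrans.naturality]
  triφ a := by
    simp only [Category.assoc, Iso.hom_inv_id_app_assoc]
    rw [reassoc_of% (I.triφ a), NatTrans.naturality, Iso.inv_hom_id_app_assoc]
  triψ a := by
    simp only [Category.assoc, Iso.hom_inv_id_app_assoc]
    rw [reassoc_of% (I.triψ a), NatTrans.naturality, Iso.inv_hom_id_app_assoc]

/-- The functor `ℝ ⥤ Arrow D` associated to a natural transformation between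
`(ℝ,≤)`-indexed diagrams. -/
@[simps]
def natTrArrow {P Q : ℝ ⥤ D} (η : P ⟶ Q) : ℝ ⥤ Arrow D where
  obj a := Arrow.mk (η.app a)
  map {a b} h := Arrow.homMk (u := P.map h) (v := Q.map h) (η.naturality h)
  map_id a := by ext <;> simp
  map_comp f g := by ext <;> simp

end General




open CategoryTheory.Limits

section AbelianFunctors

variable {A : Type u} [Category.{v} A] [Abelian A]

/-- The kernel functor on the arrow category. -/
@[simps]
noncomputable def kerF : Arrow A ⥤ A where
  obj f := kernel f.hom
  map {f g} sq := kernel.map f.hom g.hom sq.left sq.right sq.w.symm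
  map_id f := by ext; simp [kernel.map]
  map_comp sq sq' := by ext; simp [kernel.map]

/-- The cokernel functor on the arrow category. -/
@[simps]
noncomputable def cokF : Arrow A ⥤ A where
  obj f := cokernel f.hom
  map {f g} sq := cokernel.map f.hom g.hom sq.left sq.right sq.w.symm
  map_id f := by ext; simp [cokernel.map]
  map_comp sq sq' := by ext; simp [cokernel.map]

variable {P Q : ℝ ⥤ A} (η : P ⟶ Q)

/-- The kernel of a natural transformation is computed objectwise. -/
noncomputable def kernelNatIso : kernel η ≅ natTrArrow η ⋙ kerF :=
  NatIso.ofComponents (fun a => PreservesKernel.iso ((evaluation ℝ A).obj a) η) (by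
    intro a b hab
    refine (cancel_mono (kernel.ι (η.app b))).mp ?_
    simp only [Category.assoc, PreservesKernel.iso_hom, Functor.comp_map, kerF_map,
      kernel.map, kernel.lift_ι, natTrArrow_map, Arrow.homMk_left, Arrow.homMk_right,
      Arrow.mk_hom, natTrArrow_obj, kernelComparison_comp_ι, kernelComparison_comp_ι_assoc,
      evaluation_obj_map]
    have h1 : ∀ c : ℝ, kernelComparison η ((evaluation ℝ A).obj c) ≫ kernel.ι (η.app c) =
        (kernel.ι η).app c := fun c => kernelComparison_comp_ι η _
    have h4 : kerF.map (X := Arrow.mk (η.app a)) (Y := Arrow.mk (η.app b)) (Arrow.homMk (P.map hab) (Q.map hab) (η.naturality hab)) ≫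
        kernel.ι (η.app b) = kernel.ι (η.app a) ≫ P.map hab := by exact kernel.lift_ι _ _ _
    erw [Category.assoc, h1 b, Category.assoc, h4, reassoc_of% (h1 a)]
    exact (kernel.ι η).naturality hab)

/-- The cokernel of a natural transformation is computed objectwise. -/
noncomputable def cokernelNatIso : cokernel η ≅ natTrArrow η ⋙ cokF :=
  NatIso.ofComponents (fun a => PreservesCokernel.iso ((evaluation ℝ A).obj a) η) (by
    intro a b hab
    erw [← Iso.inv_comp_eq, ← Category.assoc, ← Iso.eq_comp_inv]
    refine (cancel_epi (cokernel.π (η.app a))).mp ?_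
    simp only [Category.assoc, PreservesCokernel.iso_inv, Functor.comp_map, cokF_map,
      cokernel.map, cokernel.π_desc, cokernel.π_desc_assoc, natTrArrow_map, Arrow.homMk_left,
      Arrow.homMk_right, Arrow.mk_hom, natTrArrow_obj, π_comp_cokernelComparison,
      π_comp_cokernelComparison_assoc, evaluation_obj_map]
    have h2 : ∀ c : ℝ, cokernel.π (η.app c) ≫ cokernelComparison η ((evaluation ℝ A).obj c) =
        (cokernel.π η).app c := fun c => π_comp_cokernelComparison η ((evaluation ℝ A).obj c)
    have h5 : cokernel.π (η.app a) ≫ cokF.map (X := Arrow.mk (η.app a)) (Y := Arrow.mk (η.app b)) (Arrow.homMk (P.map hab) (Q.map hab) (η.naturality hab)) =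
        Q.map hab ≫ cokernel.π (η.app b) := by exact cokernel.π_desc _ _ _
    erw [reassoc_of% (h2 a), ← Category.assoc, h5, Category.assoc, h2 b]
    exact ((cokernel.π η).naturality hab).symm)

/-- The image of a natural transformation is computed objectwise. -/
noncomputable def imageNatIso : image η ≅ natTrArrow η ⋙ Limits.im (C := A) :=
  NatIso.ofComponents (fun a => (PreservesImage.iso ((evaluation ℝ A).obj a) η).symm) (by
    intro a b hab
    rw [Iso.symm_hom, Iso.symm_hom]; refine (cancel_mono (image.ι (η.app b))).mp ?_
    simp only [Category.assoc, Functor.comp_map, im_map, natTrArrow_map, natTrArrow_obj,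
      image.map_ι, Arrow.homMk_left, Arrow.homMk_right, Arrow.mk_hom,
      PreservesImage.inv_comp_image_ι_map, PreservesImage.inv_comp_image_ι_map_assoc,
      evaluation_obj_map]
    have h3 : ∀ c : ℝ, (PreservesImage.iso ((evaluation ℝ A).obj c) η).inv ≫
        image.ι (η.app c) = (image.ι η).app c :=
      fun c => PreservesImage.inv_comp_image_ι_map _ η
    erw [Category.assoc, h3 b, Category.assoc]
    erw [image.map_ι]
    erw [reassoc_of% (h3 a)]
    exact (image.ι η).naturality hab)

end AbelianFunctors


section Sublevel

variable {X : Type} [TopologicalSpace X] {Y : Type} [TopologicalSpace Y]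

/-- The comparison map between sublevel sets of uniformly close functions. -/
lemma sublevel_le_aux (f f' : X → ℝ) (ε a : ℝ) (hb : ∀ x, |f x - f' x| ≤ ε) (x : X)
    (hx : f x ≤ a) : f' x ≤ a + ε := by
  obtain ⟨h1, h2⟩ := abs_le.mp (hb x); linarith

noncomputable def sublevelφ (f f' : X → ℝ) (ε : ℝ) (hb : ∀ x, |f x - f' x| ≤ ε) (a : ℝ) :
    (sublevel f).obj a ⟶ (sublevel f').obj (a + ε) :=
  TopCat.ofHom ⟨fun x => ⟨x.1, sublevel_le_aux f f' ε a hb x.1 x.2⟩,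
    continuous_subtype_val.subtype_mk _⟩

/-- The interleaving of the induced arrows in `A` obtained from uniformly close functions. -/
noncomputable def arrowInterleaving (h : C(Y, X)) (f f' : X → ℝ) (g g' : Y → ℝ)
    (hfg : ∀ y, f (h y) ≤ g y) (hfg' : ∀ y, f' (h y) ≤ g' y)
    {A : Type u} [Category.{v} A] (H : TopCat ⥤ A)
    {ε : ℝ} (hε : 0 ≤ ε) (hf : ∀ x, |f x - f' x| ≤ ε) (hg : ∀ y, |g y - g' y| ≤ ε) :
    Interleaving ε (natTrArrow (Functor.whiskerRight (sublevelMap h f g hfg) H))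
      (natTrArrow (Functor.whiskerRight (sublevelMap h f' g' hfg') H)) where
  hε := hε
  φ a := Arrow.homMk (u := H.map (sublevelφ g g' ε hg a)) (v := H.map (sublevelφ f f' ε hf a))
      (by erw [← H.map_comp, ← H.map_comp]; rfl)
  ψ a := Arrow.homMk
      (u := H.map (sublevelφ g' g ε (fun y => by rw [abs_sub_comm]; exact hg y) a))
      (v := H.map (sublevelφ f' f ε (fun x => by rw [abs_sub_comm]; exact hf x) a))
      (by erw [← H.map_comp, ← H.map_comp]; rfl)
  natφ a b hab := by
    ext
    · dsimp; erw [← H.map_comp, ← H.map_comp]; rfl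
    · dsimp; erw [← H.map_comp, ← H.map_comp]; rfl
  natψ a b hab := by
    ext
    · dsimp; erw [← H.map_comp, ← H.map_comp]; rfl
    · dsimp; erw [← H.map_comp, ← H.map_comp]; rfl
  triφ a := by
    ext
    · dsimp; erw [← H.map_comp]; rfl
    · dsimp; erw [← H.map_comp]; rfl
  triψ a := by
    ext
    · dsimp; erw [← H.map_comp]; rfl
    · dsimp; erw [← H.map_comp]; rfl

end Sublevel
/-- Stability for kernels, images and cokernels: with `h : Y → X` continuous,
`f ∘ h ≤ g` and `f' ∘ h ≤ g'` pointwise, `A` abelian and `H : Top ⥤ A` any functor,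
the interleaving distances between the kernels, images, and cokernels of the induced
morphisms `Hα : H∘G ⇒ H∘F` and `Hβ : H∘G' ⇒ H∘F'` (in `A^(ℝ,≤)`, computed objectwise)
are bounded by `ε = max (‖f - f'‖_∞) (‖g - g'‖_∞)`. -/
theorem stability_ker_im_coker {X Y : Type} [TopologicalSpace X] [TopologicalSpace Y]
    (h : C(Y, X)) (f f' : X → ℝ) (g g' : Y → ℝ)
    (hfg : ∀ y, f (h y) ≤ g y) (hfg' : ∀ y, f' (h y) ≤ g' y)
    {A : Type u} [Category.{v} A] [Abelian A] (H : TopCat ⥤ A) :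
    interleavingDist (kernel (Functor.whiskerRight (sublevelMap h f g hfg) H))
        (kernel (Functor.whiskerRight (sublevelMap h f' g' hfg') H)) ≤
      max (⨆ x : X, ENNReal.ofReal |f x - f' x|) (⨆ y : Y, ENNReal.ofReal |g y - g' y|) ∧
    interleavingDist (image (Functor.whiskerRight (sublevelMap h f g hfg) H))
        (image (Functor.whiskerRight (sublevelMap h f' g' hfg') H)) ≤
      max (⨆ x : X, ENNReal.ofReal |f x - f' x|) (⨆ y : Y, ENNReal.ofReal |g y - g' y|) ∧
    interleavingDist (cokernel (Functor.whiskerRight (sublevelMap h f g hfg) H))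
        (cokernel (Functor.whiskerRight (sublevelMap h f' g' hfg') H)) ≤
      max (⨆ x : X, ENNReal.ofReal |f x - f' x|) (⨆ y : Y, ENNReal.ofReal |g y - g' y|) := by
  set M := max (⨆ x : X, ENNReal.ofReal |f x - f' x|) (⨆ y : Y, ENNReal.ofReal |g y - g' y|)
    with hM
  by_cases htop : M = ⊤
  · exact ⟨htop ▸ le_top, htop ▸ le_top, htop ▸ le_top⟩
  · set ε := M.toReal with hε'
    have hε : 0 ≤ ε := ENNReal.toReal_nonneg
    have hf : ∀ x, |f x - f' x| ≤ ε := fun x => by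
      have h1 : ENNReal.ofReal |f x - f' x| ≤ M :=
        le_trans (le_iSup (fun x => ENNReal.ofReal |f x - f' x|) x) (le_max_left _ _)
      exact (ENNReal.ofReal_le_iff_le_toReal htop).mp h1
    have hg : ∀ y, |g y - g' y| ≤ ε := fun y => by
      have h1 : ENNReal.ofReal |g y - g' y| ≤ M :=
        le_trans (le_iSup (fun y => ENNReal.ofReal |g y - g' y|) y) (le_max_right _ _)
      exact (ENNReal.ofReal_le_iff_le_toReal htop).mp h1
    have bound : ENNReal.ofReal ε = M := ENNReal.ofReal_toReal htop
    have I := arrowInterleaving h f f' g g' hfg hfg' H hε hf hg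
    set η := Functor.whiskerRight (sublevelMap h f g hfg) H with hη
    set η' := Functor.whiskerRight (sublevelMap h f' g' hfg') H with hη'
    refine ⟨?_, ?_, ?_⟩
    · exact le_trans (interleavingDist_le_ofReal
        ⟨(I.comp kerF).congr (kernelNatIso η).symm (kernelNatIso η').symm⟩) bound.le
    · exact le_trans (interleavingDist_le_ofReal
        ⟨(I.comp (Limits.im (C := A))).congr (imageNatIso η).symm (imageNatIso η').symm⟩) bound.le
    · exact le_trans (interleavingDist_le_ofReal
        ⟨(I.comp cokF).congr (cokernelNatIso η).symm (cokernelNatIso η').symm⟩) bound.le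
end
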